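/- arXiv:1910.10862 — 2 statements merged into one kernel-verified Lean document; each statement's English description precedes it below -/
import Mathlib

section
/- In the design-assisted procedure, where each cluster $k$ contributes exactly one of two bicliques $C_{k,1}, C_{k,2}$ ($C_k(Z) = C_{k,j}$ deterministically when the cluster assignment $Z_{[k]}$ is a treatment vector in $\mathbb{Z}_{k,j}$, and uniformly at random when $Z_{[k]} = \mathbf{0}_k$, with the all-control assignment attached to one of the two bicliques with probability 1/2 each), and where the design treats a fixed fraction $p$ of the $K$ clusters: the conditioning mechanism satisfies $P(C \mid Z) = 2^{-(1-p)K} \cdot \mathbb{1}\{Z \in C\}$ for every candidate joint biclique $C = \bigcup_{k=1}^K C_k$. Consequently, the induced randomization distribution $P(Z \mid C) \propto \mathbb{1}\{Z \in C\} P(Z)$ and the resulting conditional randomization test is valid. -/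
open Finset

/-- design-assisted conditioning mechanism. Each cluster `k` has assignment
`z k` in a space `A` with an all-control element `zero`; the per-cluster mechanism picks the
biclique containing `z k` deterministically when `z k` is a treatment assignment, and attaches
the all-control assignment to one of the two bicliques with a fair coin; under a design that
treats a fraction `p = t/K` of the `K` clusters (so every supported assignment has exactly
`K - t` control clusters), the joint mechanism satisfies
`P(C ∣ Z) = 2^{-(1-p)K} · 1{Z ∈ C}`, and consequently the induced randomization
distribution is `P(Z ∣ C) ∝ 1{Z ∈ C} P(Z)` (normalized restriction of the design to `C`). -/
theorem stmt15 {A : Type*} [Fintype A] [DecidableEq A]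
    (K t : ℕ) (ht : t ≤ K) (zero : A)
    (Pd : (Fin K → A) → ℝ) (hPd : ∀ z, 0 ≤ Pd z) (hsum : ∑ z, Pd z = 1)
    (hsupp : ∀ z : Fin K → A, 0 < Pd z →
      (Finset.univ.filter (fun k : Fin K => z k = zero)).card = K - t)
    (Ck : Fin K → Finset A)
    (mech : (Fin K → A) → ℝ)
    (hmech : ∀ z, mech z = ∏ k : Fin K,
      (if z k = zero then (1/2 : ℝ) * (if zero ∈ Ck k then 1 else 0)
       else (if z k ∈ Ck k then 1 else 0)))
    (p : ℝ) (hp : p = (t : ℝ) / (K : ℝ)) :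
    (∀ z : Fin K → A, 0 < Pd z →
      mech z = (2 : ℝ) ^ (-((1 - p) * (K : ℝ))) * (if ∀ k, z k ∈ Ck k then 1 else 0)) ∧
    (∀ z : Fin K → A,
      mech z * Pd z / (∑ z', mech z' * Pd z')
        = (if ∀ k, z k ∈ Ck k then Pd z else 0) /
          (∑ z', if ∀ k, z' k ∈ Ck k then Pd z' else 0)) := by
  -- pointwise rewriting of mech
  have key : ∀ z : Fin K → A, mech z =
      (1/2 : ℝ) ^ ((Finset.univ.filter (fun k : Fin K => z k = zero)).card) *
        (if ∀ k, z k ∈ Ck k then 1 else 0) := by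
    intro z
    rw [hmech]
    rw [← Finset.prod_filter_mul_prod_filter_not Finset.univ (fun k : Fin K => z k = zero)]
    have h1 : ∏ k ∈ Finset.univ.filter (fun k : Fin K => z k = zero),
        (if z k = zero then (1/2 : ℝ) * (if zero ∈ Ck k then 1 else 0)
         else (if z k ∈ Ck k then 1 else 0))
      = ∏ k ∈ Finset.univ.filter (fun k : Fin K => z k = zero),
        ((1/2 : ℝ) * (if z k ∈ Ck k then 1 else 0)) := by
      refine Finset.prod_congr rfl fun k hk => ?_
      simp only [Finset.mem_filter] at hk
      rw [if_pos hk.2, hk.2]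
    have h2 : ∏ k ∈ Finset.univ.filter (fun k : Fin K => ¬ z k = zero),
        (if z k = zero then (1/2 : ℝ) * (if zero ∈ Ck k then 1 else 0)
         else (if z k ∈ Ck k then 1 else 0))
      = ∏ k ∈ Finset.univ.filter (fun k : Fin K => ¬ z k = zero),
        (if z k ∈ Ck k then (1:ℝ) else 0) := by
      refine Finset.prod_congr rfl fun k hk => ?_
      simp only [Finset.mem_filter] at hk
      rw [if_neg hk.2]
    rw [h1, h2, Finset.prod_mul_distrib, Finset.prod_const]
    rw [mul_assoc, Finset.prod_filter_mul_prod_filter_not Finset.univ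
      (fun k : Fin K => z k = zero) (fun k => if z k ∈ Ck k then (1:ℝ) else 0)]
    rw [Finset.prod_boole]
    simp only [Finset.mem_univ, forall_true_left]
  have hc : (2 : ℝ) ^ (-((1 - p) * (K : ℝ))) = (1/2 : ℝ) ^ (K - t) := by
    have hKt : (1 - p) * (K : ℝ) = ((K - t : ℕ) : ℝ) := by
      rcases Nat.eq_zero_or_pos K with hK | hK
      · subst hK
        interval_cases t
        simp [hp]
      · have hK' : (K : ℝ) ≠ 0 := Nat.cast_ne_zero.mpr hK.ne'
        rw [hp]
        push_cast [Nat.cast_sub ht]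
        field_simp
    rw [hKt, Real.rpow_neg (by norm_num), Real.rpow_natCast]
    rw [one_div, inv_pow]
  constructor
  · intro z hz
    rw [key z, hsupp z hz, hc]
  · intro z
    have hall : ∀ z' : Fin K → A, mech z' * Pd z' =
        (1/2 : ℝ) ^ (K - t) * (if ∀ k, z' k ∈ Ck k then Pd z' else 0) := by
      intro z'
      rcases eq_or_lt_of_le (hPd z') with h0 | h0
      · rw [← h0]
        simp [apply_ite (· * (0:ℝ)), apply_ite ((1/2 : ℝ) ^ (K - t) * ·)]
      · rw [key z', hsupp z' h0]
        by_cases h : ∀ k, z' k ∈ Ck k <;> simp [h]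
    simp only [hall]
    rw [← Finset.mul_sum]
    have hne : ((1/2 : ℝ) ^ (K - t)) ≠ 0 := by positivity
    rw [mul_div_mul_left _ _ hne]
end

section
/- Let $\mathcal{I} = \{\mathcal{F}_1, \ldots, \mathcal{F}_J\}$ be pairwise disjoint subsets of the exposure set $\mathbb{F}$. For $z \in \mathbb{Z}$ and unit $i$, let $A(i,z)$ be the unique $\mathcal{F}_j$ containing $f_i(z)$ if one exists, else the empty set. Suppose the potential outcomes satisfy the intersection hypothesis $\bigcap_j H_0^{\mathcal{F}_j}$ (i.e., for each $j$, $Y_i(z) = Y_i(z')$ whenever $f_i(z), f_i(z') \in \mathcal{F}_j$). If $C = (U, \mathcal{Z}')$ is a biclique of the multi-null exposure graph $G(z^{obs}; \mathcal{Z})$, which has edge $(i, z')$ iff $f_i(z') \in A(i, z^{obs})$, and $z^{obs} \in \mathcal{Z}'$, then $Y_i(z') = Y_i(z^{obs})$ for all $i \in U$, $z' \in \mathcal{Z}'$. -/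
/-- for pairwise disjoint exposure sets `Fj`, with `A i z` the unique
`Fj` containing `f i z` (empty if none), under the intersection hypothesis
`⋂_j H₀^{Fj}`, any biclique of the multi-null exposure graph `G(zobs; Zc)`
(edge `(i, z')` iff `f i z' ∈ A i zobs`) containing `zobs` allows imputation:
`Y i z' = Y i zobs` for all focal units `i` and assignments `z'` of the biclique. -/
theorem stmt17 {U Z F : Type*} (J : ℕ) (Fj : Fin J → Set F)
    (hdisj : ∀ j j', j ≠ j' → Disjoint (Fj j) (Fj j'))
    (f : U → Z → F) (Y : U → Z → ℝ)
    (hnull : ∀ j : Fin J, ∀ i, ∀ z z', f i z ∈ Fj j → f i z' ∈ Fj j → Y i z = Y i z')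
    (A : U → Z → Set F)
    (hA1 : ∀ i z, ∀ j : Fin J, f i z ∈ Fj j → A i z = Fj j)
    (hA2 : ∀ i z, (∀ j : Fin J, f i z ∉ Fj j) → A i z = ∅)
    (Zc : Set Z) (zobs : Z)
    (Uc : Set U) (Z' : Set Z) (hZ'sub : Z' ⊆ Zc)
    (hbiclique : ∀ i ∈ Uc, ∀ z' ∈ Z', f i z' ∈ A i zobs)
    (hobs : zobs ∈ Z') :
    ∀ i ∈ Uc, ∀ z' ∈ Z', Y i z' = Y i zobs := by
  intro i hi z' hz'
  by_cases h : ∃ j : Fin J, f i zobs ∈ Fj j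
  · obtain ⟨j, hj⟩ := h
    have hAeq := hA1 i zobs j hj
    have h1 : f i z' ∈ Fj j := hAeq ▸ hbiclique i hi z' hz'
    exact hnull j i z' zobs h1 hj
  · push_neg at h
    have := hbiclique i hi zobs hobs
    rw [hA2 i zobs h] at this
    exact absurd this (Set.notMem_empty _)
end
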